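/- arXiv:1706.07549 — 2 statements merged into one kernel-verified Lean document; each statement's English description precedes it below -/
import Mathlib

section
/- A standard interference function $T: \mathbb{R}_{\geq 0}^K \to \mathbb{R}_{\geq 0}^K$ (positive, monotone, and scalable) has at most one fixed point. -/
lemma standard_interference_le {K : ℕ}
    (T : (Fin K → ℝ) → (Fin K → ℝ))
    (hmono : ∀ p p' : Fin K → ℝ, (∀ l, 0 ≤ p' l) → (∀ l, p' l ≤ p l) →
      ∀ k, T p' k ≤ T p k)
    (hscale : ∀ α : ℝ, 1 < α → ∀ p : Fin K → ℝ, (∀ l, 0 ≤ p l) →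
      ∀ k, T (fun l => α * p l) k < α * T p k)
    (p q : Fin K → ℝ) (hp : ∀ l, 0 < p l) (hq : ∀ l, 0 ≤ q l)
    (hfp : T p = p) (hfq : T q = q) : ∀ k, q k ≤ p k := by
  by_contra h
  push_neg at h
  obtain ⟨k, hk⟩ := h
  have hne : (Finset.univ : Finset (Fin K)).Nonempty := ⟨k, Finset.mem_univ k⟩
  set α := Finset.univ.sup' hne (fun l => q l / p l) with hα
  have hα1 : 1 < α := by
    have h1 : 1 < q k / p k := (one_lt_div (hp k)).2 hk
    exact lt_of_lt_of_le h1 (Finset.le_sup' (fun l => q l / p l) (Finset.mem_univ k))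
  have hle : ∀ l, q l ≤ α * p l := by
    intro l
    have := Finset.le_sup' (fun l => q l / p l) (Finset.mem_univ l)
    calc q l = (q l / p l) * p l := (div_mul_cancel₀ _ (hp l).ne').symm
      _ ≤ α * p l := mul_le_mul_of_nonneg_right this (hp l).le
  obtain ⟨k0, -, hk0⟩ := Finset.exists_mem_eq_sup' hne (fun l => q l / p l)
  have heq : α * p k0 = q k0 := by
    rw [hα, hk0, div_mul_cancel₀ _ (hp k0).ne']
  have h1 : q k0 ≤ T (fun l => α * p l) k0 := by
    have := hmono (fun l => α * p l) q hq hle k0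
    rwa [hfq] at this
  have h2 : T (fun l => α * p l) k0 < α * T p k0 :=
    hscale α hα1 p (fun l => (hp l).le) k0
  rw [hfp, heq] at h2
  exact absurd (lt_of_le_of_lt h1 h2) (lt_irrefl _)

/-- A standard interference function (positive, monotone, scalable on the
nonnegative orthant) has at most one fixed point. -/
theorem standard_interference_unique_fixed_point {K : ℕ}
    (T : (Fin K → ℝ) → (Fin K → ℝ))
    (hpos : ∀ p : Fin K → ℝ, (∀ l, 0 ≤ p l) → ∀ k, 0 < T p k)
    (hmono : ∀ p p' : Fin K → ℝ, (∀ l, 0 ≤ p' l) → (∀ l, p' l ≤ p l) →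
      ∀ k, T p' k ≤ T p k)
    (hscale : ∀ α : ℝ, 1 < α → ∀ p : Fin K → ℝ, (∀ l, 0 ≤ p l) →
      ∀ k, T (fun l => α * p l) k < α * T p k)
    (p q : Fin K → ℝ) (hp : ∀ l, 0 ≤ p l) (hq : ∀ l, 0 ≤ q l)
    (hfp : T p = p) (hfq : T q = q) :
    p = q := by
  have hp' : ∀ l, 0 < p l := fun l => hfp ▸ hpos p hp l
  have hq' : ∀ l, 0 < q l := fun l => hfq ▸ hpos q hq l
  funext k
  exact le_antisymm
    (standard_interference_le T hmono hscale q p hq' hp hfq hfp k)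
    (standard_interference_le T hmono hscale p q hp' hq hfp hfq k)
end

section
/- Unconstrained feasibility: the targets $(\bar{q}_1,\dots,\bar{q}_K)$ with $\bar{q}_k > 0$ are simultaneously achievable with equality by some $\mathbf{p} > 0$ (i.e., there exists $\mathbf{p}$ with $q_k(\mathbf{p}) = \bar{q}_k$ for all $k$, where $q_k(\mathbf{p}) = P_t\frac{p_k\beta_k^2(M_t-1)}{\sum_l p_l\beta_l + N_0/\tau}$) if and only if $\sum_{k=1}^K \frac{\bar{q}_k}{P_t(M_t-1)\beta_k} < 1$. -/
open Finset

/- Writing `a_k = q̄_k / (Pt (Mt - 1) β_k)`, the `k`-th equation says that `p_k β_k` is the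
fraction `a_k` of the denominator `D = ∑ p_l β_l + N0/τ`. Summing, `∑ a_k = (D - N0/τ) / D < 1`;
conversely `D = (N0/τ) / (1 - ∑ a_k)` and `p_k = a_k D / β_k` solve the system. -/

theorem exists_pos_mul_div_sum_add_eq_iff {ι : Type*} [Fintype ι] {w a : ι → ℝ} {c : ℝ}
    (hw : ∀ k, 0 < w k) (ha : ∀ k, 0 < a k) (hc : 0 < c) :
    (∃ p : ι → ℝ, (∀ k, 0 < p k) ∧ ∀ k, p k * w k / (∑ l, p l * w l + c) = a k) ↔
      ∑ k, a k < 1 := by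
  constructor
  · rintro ⟨p, hp, hpa⟩
    have hD : 0 < ∑ l, p l * w l + c :=
      add_pos_of_nonneg_of_pos (sum_nonneg fun l _ => (mul_pos (hp l) (hw l)).le) hc
    calc ∑ k, a k = ∑ k, p k * w k / (∑ l, p l * w l + c) := by simp only [hpa]
      _ = (∑ k, p k * w k) / (∑ l, p l * w l + c) := (sum_div _ _ _).symm
      _ < 1 := (div_lt_one hD).2 (lt_add_of_pos_right _ hc)
  · intro hA
    set A := ∑ k, a k
    have h1A : 0 < 1 - A := by linarith
    set D := c / (1 - A)
    have hsum : ∑ l, a l / w l * D * w l = A * D := by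
      rw [sum_mul]
      refine sum_congr rfl fun l _ => ?_
      field_simp [(hw l).ne']
    have hD : A * D + c = D := by
      simp only [D]
      field_simp
      ring
    have hDpos : 0 < D := div_pos hc h1A
    refine ⟨fun k => a k / w k * D, fun k => mul_pos (div_pos (ha k) (hw k)) hDpos, fun k => ?_⟩
    rw [hsum, hD]
    field_simp [(hw k).ne', hDpos.ne']

/-- Unconstrained feasibility: the targets `q̄_k > 0` are simultaneously
achievable with equality by some positive beacon power vector iff
`∑_k q̄_k / (Pt (Mt - 1) β_k) < 1`. -/
theorem unconstrained_feasibility_iff {K : ℕ} (Pt N0 τ : ℝ) (Mt : ℕ)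
    (β qbar : Fin K → ℝ)
    (hPt : 0 < Pt) (hN0 : 0 < N0) (hτ : 0 < τ) (hMt : 2 ≤ Mt)
    (hβ : ∀ l, 0 < β l) (hqbar : ∀ k, 0 < qbar k) :
    (∃ p : Fin K → ℝ, (∀ k, 0 < p k) ∧ ∀ k,
        Pt * (p k * (β k) ^ 2 * ((Mt : ℝ) - 1)) / (∑ l, p l * β l + N0 / τ) = qbar k)
      ↔ ∑ k, qbar k / (Pt * ((Mt : ℝ) - 1) * β k) < 1 := by
  have hM1 : (0 : ℝ) < (Mt : ℝ) - 1 := by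
    have : (2 : ℝ) ≤ Mt := by exact_mod_cast hMt
    linarith
  have hgain : ∀ k, 0 < Pt * ((Mt : ℝ) - 1) * β k := fun k => by have := hβ k; positivity
  have normalize : ∀ (p : Fin K → ℝ) (D : ℝ) (k : Fin K),
      Pt * (p k * β k ^ 2 * ((Mt : ℝ) - 1)) / D = qbar k ↔
        p k * β k / D = qbar k / (Pt * ((Mt : ℝ) - 1) * β k) := fun p D k => by
    rw [eq_div_iff (hgain k).ne']
    ring_nf
  simp_rw [normalize]
  exact exists_pos_mul_div_sum_add_eq_iff hβ (fun k => div_pos (hqbar k) (hgain k))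
    (div_pos hN0 hτ)
end
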